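/- Let G be a connected weighted graph with Laplacian L, and suppose in a feasible DC-OPF solution every generator in some component V_i of G minus the cut-set S_B is at a binding generation limit and every boundary edge of V_i is at a binding flow limit. Then the system of binding equality rows — the power-balance rows L_{j,·}θ = injection_j for j ∈ V_i, the generator bound equalities s^g_j ∈ {s̄^g_j, s̲^g_j} for generators j ∈ V_i, and the flow bound equalities (B Cᵀθ)_e ∈ {p̄_e, p̲_e} for boundary edges e — is linearly dependent (the sum of the first two groups equals a signed combination of the third). -/
import Mathlib


/-- `C` is a (signed) incidence matrix: each column has exactly one `+1`,
one `-1`, and zeros elsewhere. -/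
def IncidenceOK {V E : Type*} (C : Matrix V E ℝ) : Prop :=
  ∀ e : E, ∃ u v : V, u ≠ v ∧ C u e = 1 ∧ C v e = -1 ∧
    ∀ w : V, w ≠ u → w ≠ v → C w e = 0

/-- The graph described by the incidence matrix `C` is connected. -/
def ConnectedInc {V E : Type*} (C : Matrix V E ℝ) : Prop :=
  ∀ u v : V, Relation.ReflTransGen (fun a c => ∃ e, C a e ≠ 0 ∧ C c e ≠ 0) u v

/-- Constraint rows of the DC-OPF problem, viewed as linear functionals on the
decision variables `(s^g, θ)`, i.e. as elements of
`(Fin NG → ℝ) × (V → ℝ)` where `V = Fin NG ⊕ Fin NL`. -/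
noncomputable def rowBalance {NG NL E : ℕ}
    (C : Matrix (Fin NG ⊕ Fin NL) (Fin E) ℝ) (b : Fin E → ℝ)
    (j : Fin NG ⊕ Fin NL) : (Fin NG → ℝ) × ((Fin NG ⊕ Fin NL) → ℝ) :=
  (fun g => if Sum.inl g = j then (-1 : ℝ) else 0,
   fun v => (C * Matrix.diagonal b * C.transpose) j v)

/-- Generator-bound constraint row `s^g_g = s̄^g_g` (or `s̲^g_g`). -/
noncomputable def rowGen {NG NL : ℕ} (g : Fin NG) :
    (Fin NG → ℝ) × ((Fin NG ⊕ Fin NL) → ℝ) :=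
  (Pi.single g (1 : ℝ), 0)

/-- Flow-bound constraint row `(B Cᵀ θ)_e = p̄_e` (or `p̲_e`). -/
noncomputable def rowFlow {NG NL E : ℕ}
    (C : Matrix (Fin NG ⊕ Fin NL) (Fin E) ℝ) (b : Fin E → ℝ) (e : Fin E) :
    (Fin NG → ℝ) × ((Fin NG ⊕ Fin NL) → ℝ) :=
  (0, fun v => (Matrix.diagonal b * C.transpose) e v)

lemma key_aux {V : Type*} [Fintype V] [DecidableEq V] {E : ℕ}
    (C : Matrix V (Fin E) ℝ) (hC : IncidenceOK C) (Vi : Finset V) (e : Fin E) :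
    (((Vi.filter (fun v => C v e ≠ 0)).card = 1 →
      (∑ j ∈ Vi, C j e = 1 ∨ ∑ j ∈ Vi, C j e = -1)) ∧
     ((Vi.filter (fun v => C v e ≠ 0)).card ≠ 1 → ∑ j ∈ Vi, C j e = 0)) ∧
    ((∀ w, C w e ≠ 0 → w ∈ Vi) → ∑ j ∈ Vi, C j e = 0) ∧
    ((∀ w, C w e ≠ 0 → w ∉ Vi) → ∑ j ∈ Vi, C j e = 0) := by
  classical
  obtain ⟨u, v, huv, hu, hv, hw⟩ := hC e
  have hval : ∀ j, C j e = (if j = u then (1:ℝ) else 0) + (if j = v then (-1:ℝ) else 0) := by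
    intro j
    by_cases h1 : j = u
    · subst h1; simp [hu, huv]
    · by_cases h2 : j = v
      · subst h2; simp [hv, h1]
      · simp [h1, h2, hw j h1 h2]
  have hsum : ∑ j ∈ Vi, C j e =
      (if u ∈ Vi then (1:ℝ) else 0) + (if v ∈ Vi then (-1:ℝ) else 0) := by
    simp_rw [hval]
    rw [Finset.sum_add_distrib, Finset.sum_ite_eq' Vi u (fun _ => (1:ℝ)),
      Finset.sum_ite_eq' Vi v (fun _ => (-1:ℝ))]
  have hfil : Vi.filter (fun w => C w e ≠ 0) = Vi ∩ {u, v} := by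
    ext w
    simp only [Finset.mem_filter, Finset.mem_inter, Finset.mem_insert, Finset.mem_singleton]
    constructor
    · rintro ⟨hwv, hne⟩
      refine ⟨hwv, ?_⟩
      by_contra hcon
      push_neg at hcon
      exact hne (hw w hcon.1 hcon.2)
    · rintro ⟨hwv, h | h⟩
      · subst h; exact ⟨hwv, by rw [hu]; norm_num⟩
      · subst h; exact ⟨hwv, by rw [hv]; norm_num⟩
  have hcard : (Vi.filter (fun w => C w e ≠ 0)).card =
      (if u ∈ Vi then 1 else 0) + (if v ∈ Vi then 1 else 0) := by
    rw [hfil, Finset.inter_comm, ← Finset.filter_mem_eq_inter]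
    rw [Finset.filter_insert, Finset.filter_singleton]
    by_cases h1 : u ∈ Vi <;> by_cases h2 : v ∈ Vi <;>
      simp [h1, h2, Finset.card_insert_of_notMem, huv]
  refine ⟨⟨?_, ?_⟩, ?_, ?_⟩
  · intro h1
    rw [hcard] at h1
    rw [hsum]
    by_cases hu' : u ∈ Vi <;> by_cases hv' : v ∈ Vi <;> simp [hu', hv'] at h1 ⊢
  · intro h1
    rw [hcard] at h1
    rw [hsum]
    by_cases hu' : u ∈ Vi <;> by_cases hv' : v ∈ Vi <;> simp [hu', hv'] at h1 ⊢
  · intro hall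
    have h1 : u ∈ Vi := hall u (by rw [hu]; norm_num)
    have h2 : v ∈ Vi := hall v (by rw [hv]; norm_num)
    rw [hsum]; simp [h1, h2]
  · intro hnone
    have h1 : u ∉ Vi := hnone u (by rw [hu]; norm_num)
    have h2 : v ∉ Vi := hnone v (by rw [hv]; norm_num)
    rw [hsum]; simp [h1, h2]

/-- Suppose in a feasible DC-OPF solution every generator in a component `Vi`
of `G` minus the cut-set `SB` is at a binding generation limit and every
boundary edge of `Vi` is at a binding flow limit.  Then the binding rows are
linearly dependent: the sum of the power-balance rows over `Vi` plus the
generator-bound rows for generators in `Vi` equals a `±1`-signed combination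
of the flow-bound rows of the boundary edges `E₀`. -/
theorem stmt12 {NG NL E : ℕ}
    (C : Matrix (Fin NG ⊕ Fin NL) (Fin E) ℝ) (b : Fin E → ℝ)
    (hC : IncidenceOK C) (hb : ∀ e, 0 < b e) (hconn : ConnectedInc C)
    (SB : Finset (Fin E)) (Vi : Finset (Fin NG ⊕ Fin NL))
    (hcomp : ∀ e ∉ SB, (∀ v, C v e ≠ 0 → v ∈ Vi) ∨ (∀ v, C v e ≠ 0 → v ∉ Vi))
    (sg sgU sgL : Fin NG → ℝ) (sl : Fin NL → ℝ) (θ : Fin NG ⊕ Fin NL → ℝ)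
    (pU pL : Fin E → ℝ)
    (hpf : (C * Matrix.diagonal b * C.transpose).mulVec θ =
      Sum.elim sg (fun j => -(sl j)))
    (hsg : ∀ g, sgL g ≤ sg g ∧ sg g ≤ sgU g)
    (hflowfeas : ∀ e, pL e ≤ (Matrix.diagonal b * C.transpose).mulVec θ e ∧
      (Matrix.diagonal b * C.transpose).mulVec θ e ≤ pU e)
    (hgenbind : ∀ g : Fin NG, Sum.inl g ∈ Vi → sg g = sgU g ∨ sg g = sgL g)
    (hflowbind : ∀ e ∈ SB.filter
        (fun e => (Vi.filter (fun v => C v e ≠ 0)).card = 1),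
      (Matrix.diagonal b * C.transpose).mulVec θ e = pU e ∨
        (Matrix.diagonal b * C.transpose).mulVec θ e = pL e) :
    ∃ σ : Fin E → ℝ,
      (∀ e ∈ SB.filter (fun e => (Vi.filter (fun v => C v e ≠ 0)).card = 1),
        σ e = 1 ∨ σ e = -1) ∧
      (∑ j ∈ Vi, rowBalance C b j) +
        (∑ g ∈ Finset.univ.filter (fun g : Fin NG => Sum.inl g ∈ Vi),
          rowGen (NL := NL) g) =
      ∑ e ∈ SB.filter (fun e => (Vi.filter (fun v => C v e ≠ 0)).card = 1),
        σ e • rowFlow C b e := by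

  classical
  refine ⟨fun e => ∑ j ∈ Vi, C j e, ?_, ?_⟩
  · intro e he
    rw [Finset.mem_filter] at he
    exact (key_aux C hC Vi e).1.1 he.2
  · have hzero : ∀ e ∉ SB.filter (fun e => (Vi.filter (fun v => C v e ≠ 0)).card = 1),
        ∑ j ∈ Vi, C j e = 0 := by
      intro e he
      rw [Finset.mem_filter] at he
      push_neg at he
      by_cases hSB : e ∈ SB
      · exact (key_aux C hC Vi e).1.2 (he hSB)
      · rcases hcomp e hSB with h | h
        · exact (key_aux C hC Vi e).2.1 h
        · exact (key_aux C hC Vi e).2.2 h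
    refine Prod.ext ?_ ?_
    · simp only [Prod.fst_add, Prod.fst_sum, rowBalance, rowGen, rowFlow,
        Prod.smul_fst, smul_zero, Finset.sum_const_zero]
      funext g
      simp only [Pi.add_apply, Finset.sum_apply, Pi.single_apply, Pi.zero_apply]
      rw [Finset.sum_ite_eq Vi (Sum.inl g) (fun _ => (-1:ℝ)),
        Finset.sum_ite_eq (Finset.univ.filter (fun g : Fin NG => Sum.inl g ∈ Vi)) g
          (fun _ => (1:ℝ))]
      by_cases h : Sum.inl g ∈ Vi <;> simp [h, Finset.mem_filter]
    · simp only [Prod.snd_add, Prod.snd_sum, rowBalance, rowGen, rowFlow,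
        Prod.smul_snd, Finset.sum_const_zero, add_zero]
      funext w
      simp only [Finset.sum_apply, Pi.smul_apply, smul_eq_mul]
      have hentry : ∀ j, (C * Matrix.diagonal b * C.transpose) j w
          = ∑ e, C j e * (b e * C w e) := by
        intro j
        rw [Matrix.mul_apply]
        refine Finset.sum_congr rfl (fun e _ => ?_)
        rw [Matrix.mul_diagonal, Matrix.transpose_apply]
        ring
      have hflowentry : ∀ e, (Matrix.diagonal b * C.transpose) e w = b e * C w e := by
        intro e
        rw [Matrix.diagonal_mul, Matrix.transpose_apply]
      simp_rw [hentry, hflowentry]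
      rw [Finset.sum_comm]
      simp_rw [← Finset.sum_mul]
      refine (Finset.sum_subset (Finset.subset_univ _) ?_).symm
      intro e _ he
      rw [hzero e he, zero_mul]
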